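/- arXiv:1702.04317 — 5 statements merged into one kernel-verified Lean document; each statement's English description precedes it below -/
import Mathlib

section
/- Let X be a real Hilbert space, f : X → X' Lipschitz (constant L) and strongly monotone (constant γ > 0) on a ball B_δ around a root x* of f. Let X_d ⊆ X be a closed subspace, and suppose the projected problem ⟨f(x_d), y⟩ = 0 for all y ∈ X_d has a solution x_d ∈ X_d ∩ B_δ. Then ‖x* − x_d‖ ≤ (L/γ) · d(x*, X_d), where d(x*, X_d) = inf_{y ∈ X_d} ‖y − x*‖. -/
/-!
Testing strong monotonicity with the error `e = x* - x_d` and using `f x* = 0` gives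
`γ‖e‖² ≤ -f(x_d) e`. Galerkin orthogonality lets us replace `e` by `x* - y` for any `y ∈ X_d`,
and the Lipschitz bound `‖f(x_d)‖ = ‖f(x*) - f(x_d)‖ ≤ L‖e‖` yields `γ‖e‖² ≤ L‖e‖‖x* - y‖`.
Cancelling `‖e‖` and taking the infimum over `y` finishes the proof, as in Céa's lemma.
-/

theorem Metric.dist_le_div_mul_infDist_of_mul_sq_le {α : Type*} [PseudoMetricSpace α]
    {s : Set α} {x z : α} {γ L : ℝ} (hγ : 0 < γ) (hz : z ∈ s)
    (h : ∀ y ∈ s, γ * dist x z ^ 2 ≤ L * dist x z * dist x y) :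
    dist x z ≤ L / γ * infDist x s := by
  rcases (dist_nonneg (x := x) (y := z)).eq_or_lt with hzero | hpos
  · have hinf : infDist x s = 0 :=
      le_antisymm (hzero ▸ infDist_le_dist_of_mem hz) infDist_nonneg
    rw [← hzero, hinf, mul_zero]
  have hcancel : ∀ y ∈ s, γ * dist x z ≤ L * dist x y := fun y hy => by
    have := h y hy
    nlinarith
  have hL : 0 < L := by
    have := hcancel z hz
    nlinarith
  have hinf : γ / L * dist x z ≤ infDist x s := (le_infDist ⟨z, hz⟩).2 fun y hy => by
    rw [div_mul_eq_mul_div, div_le_iff₀ hL, mul_comm _ L]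
    exact hcancel y hy
  calc dist x z = L / γ * (γ / L * dist x z) := by field_simp
    _ ≤ L / γ * infDist x s := by gcongr

theorem galerkin_mul_sq_norm_sub_le {E : Type*} [SeminormedAddCommGroup E] [NormedSpace ℝ E]
    (f : E → E →L[ℝ] ℝ) {V : Submodule ℝ E} {x₀ xh y : E} {L γ : ℝ} (hroot : f x₀ = 0)
    (hLip : ‖f x₀ - f xh‖ ≤ L * ‖x₀ - xh‖)
    (hmono : (f x₀ - f xh) (x₀ - xh) ≥ γ * ‖x₀ - xh‖ ^ 2)
    (hxh : xh ∈ V) (hproj : ∀ v ∈ V, f xh v = 0) (hy : y ∈ V) :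
    γ * ‖x₀ - xh‖ ^ 2 ≤ L * ‖x₀ - xh‖ * ‖x₀ - y‖ := by
  have horth : f xh (x₀ - xh) = f xh (x₀ - y) := by
    rw [← sub_add_sub_cancel x₀ y xh, map_add, hproj _ (V.sub_mem hy hxh), add_zero]
  have hdual : ‖f xh‖ ≤ L * ‖x₀ - xh‖ := by
    simpa only [hroot, zero_sub, norm_neg] using hLip
  calc γ * ‖x₀ - xh‖ ^ 2 ≤ (f x₀ - f xh) (x₀ - xh) := hmono
    _ = -f xh (x₀ - y) := by
      rw [hroot, zero_sub, neg_apply, horth]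
    _ ≤ ‖f xh‖ * ‖x₀ - y‖ := (neg_le_abs _).trans ((f xh).le_opNorm _)
    _ ≤ L * ‖x₀ - xh‖ * ‖x₀ - y‖ := by gcongr

theorem stmt1_general {X : Type*} [NormedAddCommGroup X] [InnerProductSpace ℝ X]
    (f : X → X →L[ℝ] ℝ) (xstar : X) (δ L γ : ℝ) (hδ : 0 < δ) (hγ : 0 < γ)
    (hroot : f xstar = 0)
    (hLip : ∀ x₁ ∈ Metric.ball xstar δ, ∀ x₂ ∈ Metric.ball xstar δ,
      ‖f x₁ - f x₂‖ ≤ L * ‖x₁ - x₂‖)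
    (hmono : ∀ x₁ ∈ Metric.ball xstar δ, ∀ x₂ ∈ Metric.ball xstar δ,
      (f x₁ - f x₂) (x₁ - x₂) ≥ γ * ‖x₁ - x₂‖ ^ 2)
    (Xd : Submodule ℝ X)
    (xd : X) (hxdmem : xd ∈ Xd) (hxdball : xd ∈ Metric.ball xstar δ)
    (hproj : ∀ y ∈ Xd, f xd y = 0) :
    ‖xstar - xd‖ ≤ (L / γ) * Metric.infDist xstar (Xd : Set X) := by
  have hxstar : xstar ∈ Metric.ball xstar δ := Metric.mem_ball_self hδ
  rw [← dist_eq_norm]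
  refine Metric.dist_le_div_mul_infDist_of_mul_sq_le hγ hxdmem fun y hy => ?_
  simpa only [dist_eq_norm] using galerkin_mul_sq_norm_sub_le f hroot
    (hLip _ hxstar _ hxdball) (hmono _ hxstar _ hxdball) hxdmem hproj hy

/-- Quasi-optimality of Galerkin (projected) solutions for a locally Lipschitz,
locally strongly monotone map (part 2 of the local Zarantonello theorem). -/
theorem stmt1 {X : Type*} [NormedAddCommGroup X] [InnerProductSpace ℝ X] [CompleteSpace X]
    (f : X → X →L[ℝ] ℝ) (xstar : X) (δ L γ : ℝ) (hδ : 0 < δ) (hγ : 0 < γ)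
    (hroot : f xstar = 0)
    (hLip : ∀ x₁ ∈ Metric.ball xstar δ, ∀ x₂ ∈ Metric.ball xstar δ,
      ‖f x₁ - f x₂‖ ≤ L * ‖x₁ - x₂‖)
    (hmono : ∀ x₁ ∈ Metric.ball xstar δ, ∀ x₂ ∈ Metric.ball xstar δ,
      (f x₁ - f x₂) (x₁ - x₂) ≥ γ * ‖x₁ - x₂‖ ^ 2)
    (Xd : Submodule ℝ X) (hXd : IsClosed (Xd : Set X))
    (xd : X) (hxdmem : xd ∈ Xd) (hxdball : xd ∈ Metric.ball xstar δ)
    (hproj : ∀ y ∈ Xd, f xd y = 0) :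
    ‖xstar - xd‖ ≤ (L / γ) * Metric.infDist xstar (Xd : Set X) :=
  stmt1_general f xstar δ L γ hδ hγ hroot hLip hmono Xd xd hxdmem hxdball hproj
end

section
/- Let φ₀ be a unit vector in a real Hilbert space and ψ* = φ₀ + ψ⊥ with ψ⊥ ⊥ φ₀ and ‖ψ⊥‖ = α. Let P and P* be the orthogonal projections onto span{φ₀} and span{ψ*}. Then ‖P − P*‖ ≤ 2(2 − 2(1 + α²)^{-1/2})^{1/2} =: j(α), and j is increasing on [0,∞) with j(α) = 2α + O(α²) as α → 0. -/
open scoped RealInnerProductSpace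
open Asymptotics

/-- With `ψ* = φ₀ + ψ⊥`, `ψ⊥ ⊥ φ₀`, `‖φ₀‖ = 1`, `‖ψ⊥‖ = α`, the rank-one
orthogonal projections `P`, `P*` onto `span{φ₀}` and `span{ψ*}` satisfy
`‖P − P*‖ ≤ j(α) := 2(2 − 2(1+α²)^{-1/2})^{1/2}`; moreover `j` is increasing
on `[0,∞)` and `j(α) = 2α + O(α²)` as `α → 0+`. -/
theorem stmt4 {H : Type*} [NormedAddCommGroup H] [InnerProductSpace ℝ H]
    (φ₀ ψperp ψstar : H) (α : ℝ) (hφ : ‖φ₀‖ = 1) (horth : ⟪φ₀, ψperp⟫ = 0)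
    (hα : ‖ψperp‖ = α) (hαpos : 0 < α)
    (hψ : ψstar = φ₀ + ψperp)
    (P Pstar : H →L[ℝ] H)
    (hP : ∀ x, P x = ⟪φ₀, x⟫ • φ₀)
    (hPstar : ∀ x, Pstar x = ⟪‖ψstar‖⁻¹ • ψstar, x⟫ • (‖ψstar‖⁻¹ • ψstar)) :
    ‖P - Pstar‖ ≤ 2 * Real.sqrt (2 - 2 / Real.sqrt (1 + α ^ 2)) ∧
    StrictMonoOn (fun β : ℝ => 2 * Real.sqrt (2 - 2 / Real.sqrt (1 + β ^ 2))) (Set.Ici 0) ∧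
    (fun β : ℝ => 2 * Real.sqrt (2 - 2 / Real.sqrt (1 + β ^ 2)) - 2 * β)
      =O[nhdsWithin 0 (Set.Ioi 0)] fun β : ℝ => β ^ 2 := by
  refine ⟨?_, ?_, ?_⟩
  · -- operator norm bound
    set ns := ‖ψstar‖ with hns
    have hns2 : ns ^ 2 = 1 + α ^ 2 := by
      rw [hns, hψ, norm_add_sq_real, hφ, hα, horth]; ring
    have hnspos : 0 < ns := by nlinarith [norm_nonneg ψstar]
    have hnseq : Real.sqrt (1 + α ^ 2) = ns := by
      rw [← hns2, Real.sqrt_sq hnspos.le]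
    set v := ns⁻¹ • ψstar with hv
    have hvn : ‖v‖ = 1 := by
      rw [hv, norm_smul, norm_inv, Real.norm_eq_abs, abs_of_pos hnspos, ← hns,
        inv_mul_cancel₀ hnspos.ne']
    have huv : ⟪φ₀, v⟫ = ns⁻¹ := by
      rw [hv, real_inner_smul_right, hψ, inner_add_right, horth,
        real_inner_self_eq_norm_sq, hφ]
      ring
    have hd2 : ‖φ₀ - v‖ ^ 2 = 2 - 2 / ns := by
      rw [norm_sub_sq_real, hφ, hvn, huv]; ring
    have hdeq : ‖φ₀ - v‖ = Real.sqrt (2 - 2 / Real.sqrt (1 + α ^ 2)) := by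
      rw [hnseq, ← hd2, Real.sqrt_sq (norm_nonneg _)]
    rw [← hdeq]
    apply ContinuousLinearMap.opNorm_le_bound _ (by positivity)
    intro x
    rw [ContinuousLinearMap.sub_apply, hP, hPstar]
    have key : ⟪φ₀, x⟫ • φ₀ - ⟪v, x⟫ • v = ⟪φ₀, x⟫ • (φ₀ - v) + ⟪φ₀ - v, x⟫ • v := by
      rw [inner_sub_left, smul_sub, sub_smul]
      abel
    rw [key]
    have h1 : |⟪φ₀, x⟫| ≤ ‖x‖ := by
      have := abs_real_inner_le_norm φ₀ x; rwa [hφ, one_mul] at this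
    have h2 : |⟪φ₀ - v, x⟫| ≤ ‖φ₀ - v‖ * ‖x‖ := abs_real_inner_le_norm _ x
    calc ‖⟪φ₀, x⟫ • (φ₀ - v) + ⟪φ₀ - v, x⟫ • v‖
        ≤ ‖⟪φ₀, x⟫ • (φ₀ - v)‖ + ‖⟪φ₀ - v, x⟫ • v‖ := norm_add_le _ _
      _ = |⟪φ₀, x⟫| * ‖φ₀ - v‖ + |⟪φ₀ - v, x⟫| * ‖v‖ := by
          rw [norm_smul, norm_smul, Real.norm_eq_abs, Real.norm_eq_abs]
      _ ≤ ‖x‖ * ‖φ₀ - v‖ + ‖φ₀ - v‖ * ‖x‖ * 1 := by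
          rw [hvn]
          gcongr
      _ = 2 * ‖φ₀ - v‖ * ‖x‖ := by ring
  · -- strict monotonicity
    clear hP hPstar hφ horth hα hψ hαpos P Pstar φ₀ ψperp ψstar α
    intro a ha b hb hab
    dsimp only
    have h1a : (1:ℝ) ≤ Real.sqrt (1 + a ^ 2) := by
      have := Real.sqrt_le_sqrt (show (1:ℝ) ≤ 1 + a ^ 2 by nlinarith)
      rwa [Real.sqrt_one] at this
    have hlt : Real.sqrt (1 + a ^ 2) < Real.sqrt (1 + b ^ 2) := by
      apply Real.sqrt_lt_sqrt (by positivity)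
      have ha' : (0:ℝ) ≤ a := ha
      nlinarith
    have hdiv : 2 / Real.sqrt (1 + b ^ 2) < 2 / Real.sqrt (1 + a ^ 2) :=
      div_lt_div_of_pos_left two_pos (by linarith) hlt
    have hX0 : (0:ℝ) ≤ 2 - 2 / Real.sqrt (1 + a ^ 2) := by
      have : 2 / Real.sqrt (1 + a ^ 2) ≤ 2 := by
        rw [div_le_iff₀ (by linarith)]; linarith
      linarith
    have hXY : 2 - 2 / Real.sqrt (1 + a ^ 2) < 2 - 2 / Real.sqrt (1 + b ^ 2) := by linarith
    have := Real.sqrt_lt_sqrt hX0 hXY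
    linarith
  · -- asymptotics
    clear hP hPstar hφ horth hα hψ hαpos P Pstar φ₀ ψperp ψstar α
    rw [isBigO_iff]
    refine ⟨2, ?_⟩
    filter_upwards [Ioc_mem_nhdsGT_of_mem (Set.mem_Ico.mpr ⟨le_refl (0:ℝ), one_pos⟩)]
    intro β hβ
    obtain ⟨hβ0, hβ1⟩ := hβ
    set s := Real.sqrt (1 + β ^ 2) with hs
    have hs2 : s ^ 2 = 1 + β ^ 2 := Real.sq_sqrt (by positivity)
    have hs1 : 1 ≤ s := by
      have := Real.sqrt_le_sqrt (show (1:ℝ) ≤ 1 + β ^ 2 by nlinarith)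
      rwa [Real.sqrt_one] at this
    have hsle2 : s ≤ 2 := by nlinarith
    have hspos : 0 < s := by linarith
    have hin : (0:ℝ) ≤ 2 - 2 / s := by
      have : 2 / s ≤ 2 := by rw [div_le_iff₀ hspos]; linarith
      linarith
    set t := Real.sqrt (2 - 2 / s) with ht
    have ht2 : t ^ 2 = 2 - 2 / s := Real.sq_sqrt hin
    have ht0 : 0 ≤ t := Real.sqrt_nonneg _
    have hts : t ^ 2 * s = 2 * s - 2 := by rw [ht2]; field_simp
    have htle : t ≤ β := by
      have h1 : 2 - 2 / s ≤ β ^ 2 := by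
        rw [sub_le_iff_le_add, ← sub_le_iff_le_add']
        rw [le_div_iff₀ hspos]
        nlinarith [sq_nonneg (s - 1)]
      calc t ≤ Real.sqrt (β ^ 2) := Real.sqrt_le_sqrt h1
      _ = β := by rw [Real.sqrt_sq hβ0.le]
    have hd1 : (β ^ 2 - t ^ 2) * s = (s - 1) ^ 2 * (s + 2) := by
      linear_combination (-1) * hts + (-s) * hs2
    have hsm1 : s - 1 ≤ β ^ 2 / 2 := by nlinarith [sq_nonneg (s - 1)]
    have h9 : (s - 1) ^ 2 ≤ (β ^ 2 / 2) ^ 2 := by nlinarith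
    have hbt2 : β ^ 2 - t ^ 2 ≤ β ^ 4 := by nlinarith [sq_nonneg (s - 1)]
    have hβt : β - t ≤ β ^ 2 := by
      nlinarith [mul_nonneg ht0 (sub_nonneg.2 htle), mul_pos hβ0 hβ0,
        mul_nonneg (mul_nonneg hβ0.le hβ0.le) hβ0.le]
    rw [Real.norm_eq_abs, Real.norm_eq_abs, abs_of_nonpos (by linarith),
      abs_of_nonneg (sq_nonneg β)]
    linarith
end

section
/- Let H be a real Hilbert space, A : H → H a bounded symmetric operator, E* ∈ ℝ, P* the orthogonal projection onto the kernel of A − E* (assumed one-dimensional, spanned by ψ*). Suppose ⟨(I − P*)ψ, (A − E*)(I − P*)ψ⟩ ≥ γ*‖(I − P*)ψ‖² for all ψ, with γ* > 0. Let φ₀ be a unit vector with ψ* = φ₀ + ψ⊥, ψ⊥ ⊥ φ₀, ‖ψ⊥‖ = α, and let Q = (span φ₀)^⊥. If α is small enough that j(α) := 2(2 − 2(1+α²)^{-1/2})^{1/2} < 1, then for all ψ ∈ Q: ⟨ψ, (A − E*)ψ⟩ ≥ γ*(1 − j(α))²‖ψ‖². -/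
open scoped RealInnerProductSpace

/-- Gap transfer (L²-part of Lemma 3.2(i)): a spectral-gap estimate relative to the
exact ground state `ψ*` implies a gap estimate on the excluded space
`Q = (span{φ₀})⊥`, with constant `γ*(1 − j(α))²`. -/
theorem stmt5 {H : Type*} [NormedAddCommGroup H] [InnerProductSpace ℝ H]
    (A : H →L[ℝ] H) (hsym : ∀ x y, ⟪A x, y⟫ = ⟪x, A y⟫)
    (Estar γstar α : ℝ) (hγ : 0 < γstar)
    (φ₀ ψperp ψstar : H) (hφ : ‖φ₀‖ = 1) (horth : ⟪φ₀, ψperp⟫ = 0)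
    (hα : ‖ψperp‖ = α) (hψ : ψstar = φ₀ + ψperp) (hne : ψstar ≠ 0)
    (heig : A ψstar = Estar • ψstar)
    (Pstar : H →L[ℝ] H)
    (hPstar : ∀ x, Pstar x = ⟪‖ψstar‖⁻¹ • ψstar, x⟫ • (‖ψstar‖⁻¹ • ψstar))
    (hgap : ∀ ψ : H, ⟪ψ - Pstar ψ, A (ψ - Pstar ψ) - Estar • (ψ - Pstar ψ)⟫ ≥
      γstar * ‖ψ - Pstar ψ‖ ^ 2)
    (hj : 2 * Real.sqrt (2 - 2 / Real.sqrt (1 + α ^ 2)) < 1) :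
    ∀ ψ : H, ⟪φ₀, ψ⟫ = 0 →
      ⟪ψ, A ψ - Estar • ψ⟫ ≥
        γstar * (1 - 2 * Real.sqrt (2 - 2 / Real.sqrt (1 + α ^ 2))) ^ 2 * ‖ψ‖ ^ 2 := by
  intro ψ hψ0
  have hnpos : 0 < ‖ψstar‖ := norm_pos_iff.mpr hne
  have hn2 : ‖ψstar‖ ^ 2 = 1 + α ^ 2 := by
    rw [hψ, @norm_add_sq_real, horth, hφ, hα]; ring
  have hns : ‖ψstar‖ = Real.sqrt (1 + α ^ 2) := by
    rw [← hn2, Real.sqrt_sq hnpos.le]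
  set u : H := ‖ψstar‖⁻¹ • ψstar with hu
  have hu1 : ‖u‖ = 1 := by
    rw [hu, norm_smul, norm_inv, norm_norm, inv_mul_cancel₀ hnpos.ne']
  have horth' : ⟪ψperp, φ₀⟫ = 0 := by rw [real_inner_comm]; exact horth
  have hinner : ⟪u, φ₀⟫ = ‖ψstar‖⁻¹ := by
    rw [hu, real_inner_smul_left, hψ, inner_add_left,
      real_inner_self_eq_norm_sq, hφ, horth']
    ring
  have hδ : Real.sqrt (2 - 2 / Real.sqrt (1 + α ^ 2)) = ‖u - φ₀‖ := by
    have h2 : ‖u - φ₀‖ ^ 2 = 2 - 2 / Real.sqrt (1 + α ^ 2) := by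
      rw [@norm_sub_sq_real, hu1, hφ, hinner, hns, div_eq_mul_inv]; ring
    rw [← h2, Real.sqrt_sq (norm_nonneg _)]
  set δ : ℝ := ‖u - φ₀‖ with hδdef
  rw [hδ] at hj ⊢
  have hδ0 : 0 ≤ δ := norm_nonneg _
  -- bound on Pstar ψ
  have hPψ : ‖Pstar ψ‖ ≤ δ * ‖ψ‖ := by
    have hsw : ⟪u, ψ⟫ = ⟪u - φ₀, ψ⟫ := by
      rw [inner_sub_left, hψ0, sub_zero]
    rw [hPstar ψ, norm_smul, hu1, mul_one, Real.norm_eq_abs, hsw, hδdef]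
    exact abs_real_inner_le_norm _ _
  -- Pstar ψ is an eigenvector direction
  have heigP : A (Pstar ψ) = Estar • Pstar ψ := by
    rw [hPstar ψ, map_smul, map_smul, heig]
    module
  -- the quadratic form on ψ - Pψ equals that on ψ
  have hAsub : A (ψ - Pstar ψ) - Estar • (ψ - Pstar ψ) = A ψ - Estar • ψ := by
    rw [map_sub, heigP]; module
  have hP0 : ⟪Pstar ψ, A ψ - Estar • ψ⟫ = 0 := by
    rw [inner_sub_right, real_inner_smul_right, ← hsym, heigP,
      real_inner_smul_left, sub_self]
  have hkey : ⟪ψ - Pstar ψ, A (ψ - Pstar ψ) - Estar • (ψ - Pstar ψ)⟫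
      = ⟪ψ, A ψ - Estar • ψ⟫ := by
    rw [hAsub, inner_sub_left, hP0, sub_zero]
  have hg := hgap ψ
  rw [hkey] at hg
  have h1 : ‖ψ‖ - ‖Pstar ψ‖ ≤ ‖ψ - Pstar ψ‖ := norm_sub_norm_le _ _
  have hψn : 0 ≤ ‖ψ‖ := norm_nonneg _
  have hPn : 0 ≤ ‖Pstar ψ‖ := norm_nonneg _
  have hlow : (1 - 2*δ) * ‖ψ‖ ≤ ‖ψ - Pstar ψ‖ := by
    nlinarith [mul_nonneg hδ0 hψn]
  have hnn : 0 ≤ (1 - 2*δ) * ‖ψ‖ := mul_nonneg (by linarith) hψn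
  calc γstar * (1 - 2*δ) ^ 2 * ‖ψ‖ ^ 2 = γstar * ((1 - 2*δ) * ‖ψ‖) ^ 2 := by ring
    _ ≤ γstar * ‖ψ - Pstar ψ‖ ^ 2 :=
        mul_le_mul_of_nonneg_left (pow_le_pow_left₀ hnn hlow 2) hγ.le
    _ ≤ ⟪ψ, A ψ - Estar • ψ⟫ := hg
end

section
/- Let H be a real Hilbert space, 𝓗 ⊆ H dense with its own Hilbert norm, and let a : 𝓗 × 𝓗 → ℝ be a bounded bilinear form (representing a bounded operator Ĥ : 𝓗 → 𝓗'). Define the bivariational quotient 𝓔(ψ, ψ') := a(ψ', ψ)/⟨ψ', ψ⟩ on the set where ⟨ψ', ψ⟩ ≠ 0. Then 𝓔 is continuously differentiable there, and D_ψ 𝓔(ψ, ψ') = 0 and D_{ψ'} 𝓔(ψ, ψ') = 0 hold simultaneously if and only if there is E ∈ ℝ with a(φ, ψ) = E⟨φ, ψ⟩ for all φ ∈ 𝓗 (right eigenvector equation) and a(ψ', φ) = E⟨ψ', φ⟩ for all φ ∈ 𝓗 (left eigenvector equation), with E = 𝓔(ψ, ψ'). -/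
/-!
Both partial derivatives of `𝓔` are derivatives of a quotient `f / g` of two continuous linear
functionals, and by the quotient rule such a derivative vanishes at `x` exactly when `f` is the
multiple `f x / g x` of `g`. For the derivative in `ψ` this is the left eigenvector equation of
`ψ'`, for the derivative in `ψ'` the right one of `ψ`, both with the multiple `𝓔(ψ, ψ')`.
-/

open scoped RealInnerProductSpace

namespace ContinuousLinearMap

variable {𝕜 E : Type*} [NontriviallyNormedField 𝕜] [NormedAddCommGroup E] [NormedSpace 𝕜 E]

theorem fderiv_div_apply (f g : E →L[𝕜] 𝕜) {x : E} (hx : g x ≠ 0) (v : E) :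
    fderiv 𝕜 (fun y => f y / g y) x v = (f v * g x - f x * g v) / g x ^ 2 := by
  have hdiv : (fun y => f y / g y) = f * (·⁻¹) ∘ g := funext fun y => div_eq_mul_inv _ _
  rw [hdiv, (f.hasFDerivAt.mul ((hasFDerivAt_inv hx).comp x g.hasFDerivAt)).fderiv]
  simp only [Function.comp_apply, add_apply, smul_apply, comp_apply, toSpanSingleton_apply,
    smul_eq_mul, mul_neg]
  field_simp
  ring

theorem fderiv_div_eq_zero_iff (f g : E →L[𝕜] 𝕜) {x : E} (hx : g x ≠ 0) :
    fderiv 𝕜 (fun y => f y / g y) x = 0 ↔ ∀ v, f v = f x / g x * g v := by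
  rw [ContinuousLinearMap.ext_iff]
  refine forall_congr' fun v => ?_
  rw [f.fderiv_div_apply g hx, zero_apply, div_eq_zero_iff, or_iff_left (pow_ne_zero 2 hx),
    sub_eq_zero, div_mul_eq_mul_div, eq_div_iff hx, mul_comm]

end ContinuousLinearMap

theorem stmt13_general {X H : Type*} [NormedAddCommGroup X] [InnerProductSpace ℝ X]
    [NormedAddCommGroup H] [InnerProductSpace ℝ H]
    (a : X →L[ℝ] X →L[ℝ] ℝ) (ι : X →L[ℝ] H) :
    ContDiffOn ℝ 1 (fun p : X × X => a p.2 p.1 / ⟪ι p.2, ι p.1⟫)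
      {p : X × X | ⟪ι p.2, ι p.1⟫ ≠ 0} ∧
    ∀ ψ ψ' : X, ⟪ι ψ', ι ψ⟫ ≠ 0 →
      ((fderiv ℝ (fun φ : X => a ψ' φ / ⟪ι ψ', ι φ⟫) ψ = 0 ∧
        fderiv ℝ (fun φ : X => a φ ψ / ⟪ι φ, ι ψ⟫) ψ' = 0) ↔
       ∃ E : ℝ, (∀ φ : X, a φ ψ = E * ⟪ι φ, ι ψ⟫) ∧
         (∀ φ : X, a ψ' φ = E * ⟪ι ψ', ι φ⟫) ∧
         E = a ψ' ψ / ⟪ι ψ', ι ψ⟫) := by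
  refine ⟨ContDiffOn.div ?_ ?_ fun p hp => hp, fun ψ ψ' hne => ?_⟩
  · exact (a.isBoundedBilinearMap.contDiff.comp (contDiff_snd.prodMk contDiff_fst)).contDiffOn
  · exact (ContDiff.inner ℝ (ι.contDiff.comp contDiff_snd)
      (ι.contDiff.comp contDiff_fst)).contDiffOn
  have hleft := (a ψ').fderiv_div_eq_zero_iff ((innerSL ℝ (ι ψ')).comp ι) hne
  have hright := (a.flip ψ).fderiv_div_eq_zero_iff (((innerSL ℝ).flip (ι ψ)).comp ι) hne
  refine (and_congr hleft hright).trans ⟨fun ⟨hL, hR⟩ => ⟨_, hR, hL, rfl⟩, ?_⟩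
  rintro ⟨E, hR, hL, rfl⟩
  exact ⟨hL, hR⟩

/-- The bivariational principle: the bivariational quotient
`𝓔(ψ, ψ') = a(ψ', ψ)/⟨ψ', ψ⟩` is C¹ where `⟨ψ', ψ⟩ ≠ 0`, and both partial
derivatives vanish iff `ψ` solves the right and `ψ'` the left (weak) eigenvalue
problem with common eigenvalue `E = 𝓔(ψ, ψ')`. -/
theorem stmt13 {X H : Type*} [NormedAddCommGroup X] [InnerProductSpace ℝ X]
    [NormedAddCommGroup H] [InnerProductSpace ℝ H]
    (a : X →L[ℝ] X →L[ℝ] ℝ) (ι : X →L[ℝ] H) (hinj : Function.Injective ι)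
    (hdense : DenseRange ι) :
    ContDiffOn ℝ 1 (fun p : X × X => a p.2 p.1 / ⟪ι p.2, ι p.1⟫)
      {p : X × X | ⟪ι p.2, ι p.1⟫ ≠ 0} ∧
    ∀ ψ ψ' : X, ⟪ι ψ', ι ψ⟫ ≠ 0 →
      ((fderiv ℝ (fun φ : X => a ψ' φ / ⟪ι ψ', ι φ⟫) ψ = 0 ∧
        fderiv ℝ (fun φ : X => a φ ψ / ⟪ι φ, ι ψ⟫) ψ' = 0) ↔
       ∃ E : ℝ, (∀ φ : X, a φ ψ = E * ⟪ι φ, ι ψ⟫) ∧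
         (∀ φ : X, a ψ' φ = E * ⟪ι ψ', ι φ⟫) ∧
         E = a ψ' ψ / ⟪ι ψ', ι ψ⟫) :=
  stmt13_general a ι
end

section
/- Let X be a Hilbert space, F : X → X' with root x* and strongly monotone with constant γ and Lipschitz with constant L on B_δ(x*). Let X_d ⊆ X be a closed subspace with κ := d(x*, X_d) ≤ δγ/(γ + L). Then, setting x_m ∈ X_d the closest point to x*, the ball of radius R := δ − κ in X_d around x_m is contained in B_δ(x*), and for every v ∈ X_d with ‖v‖ = R one has ⟨F(x_m + v), v⟩ ≥ γR² − LκR ≥ 0. -/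
/-- The key inequality in the proof of existence of discrete solutions
(Theorem 3.9): with `κ = d(x*, X_d) ≤ δγ/(γ+L)` attained at `x_m ∈ X_d` and
`R = δ − κ`, the ball of radius `R` in `X_d` around `x_m` lies in `B_δ(x*)` and
`⟨F(x_m + v), v⟩ ≥ γR² − LκR ≥ 0` for `v ∈ X_d` with `‖v‖ = R`. -/
theorem stmt18 {X : Type*} [NormedAddCommGroup X] [InnerProductSpace ℝ X] [CompleteSpace X]
    (F : X → X →L[ℝ] ℝ) (xstar : X) (δ γ L κ : ℝ)
    (hδ : 0 < δ) (hγ : 0 < γ) (hL : 0 ≤ L)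
    (hroot : F xstar = 0)
    (hmono : ∀ x ∈ Metric.closedBall xstar δ, ∀ y ∈ Metric.closedBall xstar δ,
      (F x - F y) (x - y) ≥ γ * ‖x - y‖ ^ 2)
    (hLip : ∀ x ∈ Metric.closedBall xstar δ, ∀ y ∈ Metric.closedBall xstar δ,
      ‖F x - F y‖ ≤ L * ‖x - y‖)
    (Xd : Submodule ℝ X) (hXd : IsClosed (Xd : Set X))
    (hκ : κ = Metric.infDist xstar (Xd : Set X))
    (xm : X) (hxm : xm ∈ Xd) (hxmdist : ‖xm - xstar‖ = κ)
    (hsmall : κ ≤ δ * γ / (γ + L)) :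
    (∀ v ∈ Xd, ‖v‖ < δ - κ → xm + v ∈ Metric.ball xstar δ) ∧
    (∀ v ∈ Xd, ‖v‖ = δ - κ →
      F (xm + v) v ≥ γ * (δ - κ) ^ 2 - L * κ * (δ - κ) ∧
      γ * (δ - κ) ^ 2 - L * κ * (δ - κ) ≥ 0) := by
  have hκ0 : 0 ≤ κ := hκ ▸ Metric.infDist_nonneg
  have hγL : 0 < γ + L := by linarith
  have hk2 : κ * (γ + L) ≤ δ * γ := (le_div_iff₀ hγL).mp hsmall
  have hκδ : κ ≤ δ := by nlinarith
  constructor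
  · intro v hv hvR
    rw [Metric.mem_ball, dist_eq_norm]
    have h1 : xm + v - xstar = (xm - xstar) + v := by abel
    calc ‖xm + v - xstar‖ ≤ ‖xm - xstar‖ + ‖v‖ := by rw [h1]; exact norm_add_le _ _
      _ < δ := by rw [hxmdist]; linarith
  · intro v hv hvR
    have hxball : xm + v ∈ Metric.closedBall xstar δ := by
      rw [Metric.mem_closedBall, dist_eq_norm]
      have h1 : xm + v - xstar = (xm - xstar) + v := by abel
      calc ‖xm + v - xstar‖ ≤ ‖xm - xstar‖ + ‖v‖ := by rw [h1]; exact norm_add_le _ _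
        _ ≤ δ := by rw [hxmdist, hvR]; linarith
    have hxmball : xm ∈ Metric.closedBall xstar δ := by
      rw [Metric.mem_closedBall, dist_eq_norm, hxmdist]; exact hκδ
    have hxsball : xstar ∈ Metric.closedBall xstar δ := Metric.mem_closedBall_self hδ.le
    have hA : (F (xm + v) - F xm) v ≥ γ * ‖v‖ ^ 2 := by
      have h := hmono (xm + v) hxball xm hxmball
      have hxv : xm + v - xm = v := by abel
      rwa [hxv] at h
    have hBnorm : ‖F xm - F xstar‖ ≤ L * κ := by
      have h := hLip xm hxmball xstar hxsball
      rwa [hxmdist] at h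
    have hB : F xm v ≥ -(L * κ * ‖v‖) := by
      have h1 : F xm v = (F xm - F xstar) v := by rw [hroot]; simp
      have h2 : |(F xm - F xstar) v| ≤ ‖F xm - F xstar‖ * ‖v‖ := by
        rw [← Real.norm_eq_abs]; exact (F xm - F xstar).le_opNorm v
      have h3 : ‖F xm - F xstar‖ * ‖v‖ ≤ L * κ * ‖v‖ :=
        mul_le_mul_of_nonneg_right hBnorm (norm_nonneg v)
      have h4 := (abs_le.mp (h2.trans h3)).1
      linarith [h1 ▸ h4]
    have hsplit : F (xm + v) v = (F (xm + v) - F xm) v + F xm v := by simp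
    refine ⟨?_, by nlinarith⟩
    rw [hsplit, hvR] at *
    linarith
end
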